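/- arXiv:1509.05101 — 4 statements merged into one kernel-verified Lean document; each statement's English description precedes it below -/
import Mathlib

section
/- Let u, v : ℝ² → ℝ be C² functions of (x,t) with v(x,t) ≠ 0 and sin(u(x,t)) ≠ 0 at every point, and let P, Q : ℝ² → ℝ be C¹ functions of (x,t). For ε ∈ ℝ define u_ε = u − ε·Q/sin(u) and v_ε = v + ε·P/v. Then at every point, d/dε at ε = 0 of [ ∂/∂t (v_ε²/2) + ∂/∂x (cos u_ε) ] equals ∂P/∂t + ∂Q/∂x. In particular, for every conservation law D_t P + D_x Q = 0 of the sine-Gordon system, the vector field with characteristics (−Q/sin u, P/v) deforms the conservation law ∂_t(v²/2) + ∂_x(cos u) = 0 into the conservation law ∂_t P + ∂_x Q = 0. -/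
/-- Partial derivative with respect to the first variable `x` of a function of `(x, t)`. -/
noncomputable def px (f : ℝ × ℝ → ℝ) (p : ℝ × ℝ) : ℝ := deriv (fun x => f (x, p.2)) p.1

/-- Partial derivative with respect to the second variable `t` of a function of `(x, t)`. -/
noncomputable def pt (f : ℝ × ℝ → ℝ) (p : ℝ × ℝ) : ℝ := deriv (fun t => f (p.1, t)) p.2

/-!
Varying a flux commutes with differentiating it: the ε-derivative of `∂_s g(a + ε w)` at
`ε = 0` is `∂_s (g'(a) w)`, both being `g''(a) w a' + g'(a) w'`. So the deformed divergence
varies by `∂_t (v w₁) + ∂_x (-sin u · w₂)`, and the characteristics `w₁ = P / v`,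
`w₂ = -Q / sin u` are exactly those making these linearized fluxes `P` and `Q`.
-/

theorem hasDerivAt_deriv_comp_add_mul {g a w : ℝ → ℝ} {s : ℝ} (hg : Differentiable ℝ g)
    (hg' : DifferentiableAt ℝ (deriv g) (a s)) (ha : DifferentiableAt ℝ a s)
    (hw : DifferentiableAt ℝ w s) :
    HasDerivAt (fun ε => deriv (fun s => g (a s + ε * w s)) s)
      (deriv (fun s => deriv g (a s) * w s) s) 0 := by
  have hchain : ∀ ε : ℝ, deriv (fun s => g (a s + ε * w s)) s
      = deriv g (a s + ε * w s) * (deriv a s + ε * deriv w s) := fun ε =>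
    ((hg _).hasDerivAt.comp s (ha.hasDerivAt.add (hw.hasDerivAt.const_mul ε))).deriv
  have hlin : HasDerivAt (fun ε : ℝ => a s + ε * w s) (w s) 0 := by
    simpa using ((hasDerivAt_id (0 : ℝ)).mul_const (w s)).const_add (a s)
  have hg'_at : HasDerivAt (fun ε : ℝ => deriv g (a s + ε * w s))
      (deriv (deriv g) (a s) * w s) 0 :=
    hg'.hasDerivAt.comp_of_eq 0 hlin (by simp)
  have hfactor : HasDerivAt (fun ε : ℝ => deriv a s + ε * deriv w s) (deriv w s) 0 := by
    simpa using ((hasDerivAt_id (0 : ℝ)).mul_const (deriv w s)).const_add (deriv a s)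
  have hrhs : deriv (fun s => deriv g (a s) * w s) s
      = deriv (deriv g) (a s) * deriv a s * w s + deriv g (a s) * deriv w s :=
    ((hg'.hasDerivAt.comp s ha.hasDerivAt).mul hw.hasDerivAt).deriv
  rw [funext hchain, hrhs]
  refine (hg'_at.mul hfactor).congr_deriv ?_
  simp only [zero_mul, add_zero]
  ring

theorem hasDerivAt_pt_comp_add_mul {g : ℝ → ℝ} {a w : ℝ × ℝ → ℝ} {p : ℝ × ℝ}
    (hg : Differentiable ℝ g) (hg' : DifferentiableAt ℝ (deriv g) (a p))
    (ha : DifferentiableAt ℝ a p) (hw : DifferentiableAt ℝ w p) :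
    HasDerivAt (fun ε => pt (fun q => g (a q + ε * w q)) p)
      (pt (fun q => deriv g (a q) * w q) p) 0 := by
  have hslice : DifferentiableAt ℝ (fun t : ℝ => (p.1, t)) p.2 :=
    (differentiableAt_const p.1).prodMk differentiableAt_id
  exact hasDerivAt_deriv_comp_add_mul hg hg' (ha.comp p.2 hslice) (hw.comp p.2 hslice)

theorem hasDerivAt_px_comp_add_mul {g : ℝ → ℝ} {a w : ℝ × ℝ → ℝ} {p : ℝ × ℝ}
    (hg : Differentiable ℝ g) (hg' : DifferentiableAt ℝ (deriv g) (a p))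
    (ha : DifferentiableAt ℝ a p) (hw : DifferentiableAt ℝ w p) :
    HasDerivAt (fun ε => px (fun q => g (a q + ε * w q)) p)
      (px (fun q => deriv g (a q) * w q) p) 0 := by
  have hslice : DifferentiableAt ℝ (fun x : ℝ => (x, p.2)) p.1 :=
    differentiableAt_id.prodMk (differentiableAt_const p.2)
  exact hasDerivAt_deriv_comp_add_mul hg hg' (ha.comp p.1 hslice) (hw.comp p.1 hslice)

/-- The vector field with characteristics `(−Q/sin u, P/v)`, i.e. `u_ε = u − ε Q / sin u`,
`v_ε = v + ε P / v`, deforms the divergence `D_t(v_ε²/2) + D_x(cos u_ε)` of the sine-Gordon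
conservation law `D_t(v²/2) + D_x(cos u) = 0` into the divergence `D_t P + D_x Q`; in
particular every conservation law `D_t P + D_x Q = 0` of the sine-Gordon system is obtained
from `D_t(v²/2) + D_x(cos u) = 0` by such a sub-symmetry deformation. -/
theorem sineGordon_deformation_to_any_CL (u v P Q : ℝ × ℝ → ℝ)
    (hu : ContDiff ℝ 2 u) (hv : ContDiff ℝ 2 v)
    (hP : ContDiff ℝ 1 P) (hQ : ContDiff ℝ 1 Q)
    (hvne : ∀ p : ℝ × ℝ, v p ≠ 0) (hsin : ∀ p : ℝ × ℝ, Real.sin (u p) ≠ 0) :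
    ∀ p : ℝ × ℝ,
      HasDerivAt (fun ε : ℝ =>
          pt (fun q => (v q + ε * (P q / v q)) ^ 2 / 2) p
            + px (fun q => Real.cos (u q - ε * (Q q / Real.sin (u q)))) p)
        (pt P p + px Q p) 0 := by
  intro p
  have hu1 : Differentiable ℝ u := hu.differentiable two_ne_zero
  have hv1 : Differentiable ℝ v := hv.differentiable two_ne_zero
  have hP1 : Differentiable ℝ P := hP.differentiable one_ne_zero
  have hQ1 : Differentiable ℝ Q := hQ.differentiable one_ne_zero
  have hderiv_sq : deriv (fun y : ℝ => y ^ 2 / 2) = fun y => y := by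
    funext y
    simp
  have hflux_t : (fun q => deriv (fun y : ℝ => y ^ 2 / 2) (v q) * (P q / v q)) = P := by
    funext q
    rw [hderiv_sq]
    field_simp [hvne q]
  have hflux_x : (fun q => deriv Real.cos (u q) * -(Q q / Real.sin (u q))) = Q := by
    funext q
    rw [Real.deriv_cos']
    field_simp [hsin q]
  have hvar_t := hasDerivAt_pt_comp_add_mul (g := fun y : ℝ => y ^ 2 / 2)
    (w := fun q => P q / v q) (p := p) (by fun_prop) (by rw [hderiv_sq]; fun_prop)
    (hv1 p) (by fun_prop (disch := exact hvne p))
  have hvar_x := hasDerivAt_px_comp_add_mul (g := Real.cos)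
    (w := fun q => -(Q q / Real.sin (u q))) (p := p) Real.differentiable_cos
    (by rw [Real.deriv_cos']; fun_prop) (hu1 p) (by fun_prop (disch := exact hsin p))
  rw [hflux_t] at hvar_t
  rw [hflux_x] at hvar_x
  simp only [mul_neg, ← sub_eq_add_neg] at hvar_x
  exact hvar_t.add hvar_x
end

section
/- Let u, v : ℝ² → ℝ be C² functions of (x,t) solving the 1D Euler system u_t + u·u_x = 0, v_t + u·v_x = 0 at every point of ℝ², and let γ : ℝ³ → ℝ be C¹. Define g(x,t) := γ(x − t·u(x,t), u(x,t), v(x,t)) and, for ε ∈ ℝ, u_ε := u − ε·g·∂u/∂x. Then at every point (x,t), the derivative at ε = 0 of ε ↦ ∂u_ε/∂t + u_ε·∂u_ε/∂x equals 0. (This verifies that X₃ = γ(x − ut, u, v)∂_x, whose canonical characteristic is −γ·u_x, is a sub-symmetry of the sub-system Δ₁ = u_t + u u_x of the Euler system.) -/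
/-!
Write `D f := f_t + u f_x` for the derivative along the characteristic direction `(u, 1)`.
Linearizing `Δ₁(u - ε G)` at `ε = 0` gives `-(D G + G u_x)` with `G = Γ u_x` and
`Γ = γ(x - t u, u, v)`. The arguments of `γ` are Riemann invariants (`D (x - t u) = -t D u = 0`,
`D u = D v = 0`), so `D Γ = 0`, while differentiating `D u = 0` in `x` and using the symmetry of
the second derivative gives `D u_x = -u_x²`. Hence `D G + G u_x = -Γ u_x² + Γ u_x² = 0`.
-/

section PartialDerivatives

variable {f : ℝ × ℝ → ℝ} {L : ℝ × ℝ →L[ℝ] ℝ} {p : ℝ × ℝ}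

lemma px_eq_of_hasFDerivAt (hf : HasFDerivAt f L p) : px f p = L (1, 0) :=
  (hf.comp_hasDerivAt p.1 ((hasDerivAt_id p.1).prodMk (hasDerivAt_const p.1 p.2))).deriv

lemma pt_eq_of_hasFDerivAt (hf : HasFDerivAt f L p) : pt f p = L (0, 1) :=
  (hf.comp_hasDerivAt p.2 ((hasDerivAt_const p.2 p.1).prodMk (hasDerivAt_id p.2))).deriv

lemma pt_add_mul_px (hf : HasFDerivAt f L p) (a : ℝ) : pt f p + a * px f p = L (a, 1) := by
  rw [pt_eq_of_hasFDerivAt hf, px_eq_of_hasFDerivAt hf, ← smul_eq_mul, ← map_smul, ← map_add]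
  simp

lemma px_eq_fderiv_apply (hf : Differentiable ℝ f) : px f = fun q => fderiv ℝ f q (1, 0) :=
  funext fun q => px_eq_of_hasFDerivAt (hf q).hasFDerivAt

lemma ContDiff.px {m n : WithTop ℕ∞} (hf : ContDiff ℝ n f) (hmn : m + 1 ≤ n) :
    ContDiff ℝ m (px f) := by
  have hf1 : Differentiable ℝ f :=
    hf.differentiable (ne_of_gt (lt_of_lt_of_le (by simp) hmn))
  rw [px_eq_fderiv_apply hf1]
  exact (ContinuousLinearMap.apply ℝ ℝ ((1 : ℝ), (0 : ℝ))).contDiff.comp (hf.fderiv_right hmn)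

end PartialDerivatives

lemma hasDerivAt_burgers_sub_mul {f g : ℝ × ℝ → ℝ} {f' g' : ℝ × ℝ →L[ℝ] ℝ} {p : ℝ × ℝ}
    (hf : HasFDerivAt f f' p) (hg : HasFDerivAt g g' p) :
    HasDerivAt (fun ε : ℝ =>
        pt (fun q => f q - ε * g q) p + (f p - ε * g p) * px (fun q => f q - ε * g q) p)
      (-(g' (f p, 1) + g p * f' (1, 0))) 0 := by
  have hdef (ε : ℝ) : HasFDerivAt (fun q => f q - ε * g q) (f' - ε • g') p :=
    hf.sub (hg.const_mul ε)
  simp only [pt_eq_of_hasFDerivAt (hdef _), px_eq_of_hasFDerivAt (hdef _), sub_apply, smul_apply,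
    smul_eq_mul]
  have hlin (a b : ℝ) : HasDerivAt (fun ε : ℝ => a - ε * b) (-b) 0 := by
    simpa using ((hasDerivAt_id (0 : ℝ)).mul_const b).const_sub a
  refine ((hlin _ _).add ((hlin (f p) (g p)).mul (hlin _ _))).congr_deriv ?_
  rw [← pt_add_mul_px hg (f p), pt_eq_of_hasFDerivAt hg, px_eq_of_hasFDerivAt hg]
  ring

section Burgers

variable {u : ℝ × ℝ → ℝ}

lemma fderiv_px_apply_of_burgers (hu : ContDiff ℝ 2 u)
    (hsol : ∀ q, pt u q + u q * px u q = 0) (p : ℝ × ℝ) :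
    fderiv ℝ (px u) p (u p, 1) = -px u p ^ 2 := by
  have hud : Differentiable ℝ u := hu.differentiable two_ne_zero
  have hD (q : ℝ × ℝ) : fderiv ℝ u q (u q, 1) = 0 :=
    (pt_add_mul_px (hud q).hasFDerivAt _).symm.trans (hsol q)
  set H := fderiv ℝ (fderiv ℝ u) p
  have hH : HasFDerivAt (fderiv ℝ u) H p :=
    ((hu.fderiv_right le_rfl).differentiable one_ne_zero p).hasFDerivAt
  have hsymm : H (1, 0) (u p, 1) = H (u p, 1) (1, 0) :=
    second_derivative_symmetric (fun y => (hud y).hasFDerivAt) hH _ _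
  have hdir : HasFDerivAt (fun q => ((u q, 1) : ℝ × ℝ)) ((fderiv ℝ u p).prod 0) p :=
    (hud p).hasFDerivAt.prodMk (hasFDerivAt_const _ _)
  have hzero : (fderiv ℝ u p).comp ((fderiv ℝ u p).prod 0) + H.flip (u p, 1) = 0 :=
    (hH.clm_apply hdir).unique (by simpa only [hD] using hasFDerivAt_const (0 : ℝ) p)
  have hx := congrArg (fun L : ℝ × ℝ →L[ℝ] ℝ => L (1, 0)) hzero
  have hlin : fderiv ℝ u p (fderiv ℝ u p (1, 0), 0) = fderiv ℝ u p (1, 0) ^ 2 := by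
    rw [sq, ← smul_eq_mul, ← map_smul]
    simp
  simp only [add_apply, ContinuousLinearMap.comp_apply, ContinuousLinearMap.prod_apply,
    zero_apply, ContinuousLinearMap.flip_apply, hlin] at hx
  rw [px_eq_fderiv_apply hud, (hH.clm_apply (hasFDerivAt_const (1, 0) p)).fderiv]
  simp only [ContinuousLinearMap.comp_zero, ContinuousLinearMap.flip_apply, zero_add, ← hsymm]
  linarith

lemma fderiv_riemannInvariants_apply {v : ℝ × ℝ → ℝ} {p : ℝ × ℝ}
    (hu : DifferentiableAt ℝ u p) (hv : DifferentiableAt ℝ v p) :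
    fderiv ℝ (fun q : ℝ × ℝ => (q.1 - q.2 * u q, u q, v q)) p (u p, 1)
      = (-p.2 * fderiv ℝ u p (u p, 1), fderiv ℝ u p (u p, 1), fderiv ℝ v p (u p, 1)) := by
  have h : HasFDerivAt (fun q : ℝ × ℝ => (q.1 - q.2 * u q, u q, v q)) _ p :=
    (hasFDerivAt_fst.sub (hasFDerivAt_snd.mul hu.hasFDerivAt)).prodMk
      (hu.hasFDerivAt.prodMk hv.hasFDerivAt)
  rw [h.fderiv]
  simp only [ContinuousLinearMap.prod_apply, sub_apply, add_apply, smul_apply,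
    ContinuousLinearMap.coe_fst', ContinuousLinearMap.coe_snd', smul_eq_mul, Prod.mk.injEq]
  exact ⟨by ring, trivial⟩

end Burgers

/-- The vector field `X₃ = γ(x − ut, u, v) ∂_x`, with canonical characteristic `−γ·u_x`,
is a sub-symmetry of the sub-system `Δ₁ = u_t + u u_x` of the 1D Euler system: on every
solution of the full system, the infinitesimal deformation of `Δ₁` along `X₃` vanishes. -/
theorem euler_subsymmetry_gamma (u v : ℝ × ℝ → ℝ) (γ : ℝ × ℝ × ℝ → ℝ)
    (hu : ContDiff ℝ 2 u) (hv : ContDiff ℝ 2 v) (hγ : ContDiff ℝ 1 γ)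
    (hsol₁ : ∀ p : ℝ × ℝ, pt u p + u p * px u p = 0)
    (hsol₂ : ∀ p : ℝ × ℝ, pt v p + u p * px v p = 0) :
    ∀ p : ℝ × ℝ,
      HasDerivAt (fun ε : ℝ =>
          pt (fun q => u q - ε * γ (q.1 - q.2 * u q, u q, v q) * px u q) p
            + (u p - ε * γ (p.1 - p.2 * u p, u p, v p) * px u p)
              * px (fun q => u q - ε * γ (q.1 - q.2 * u q, u q, v q) * px u q) p)
        0 0 := by
  intro p
  have hud : Differentiable ℝ u := hu.differentiable two_ne_zero
  have hvd : Differentiable ℝ v := hv.differentiable two_ne_zero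
  set φ : ℝ × ℝ → ℝ × ℝ × ℝ := fun q => (q.1 - q.2 * u q, u q, v q)
  have hφ : DifferentiableAt ℝ φ p :=
    ((differentiable_fst.sub (differentiable_snd.mul hud)).prodMk (hud.prodMk hvd)) p
  have hΓ : HasFDerivAt (fun q => γ (φ q)) ((fderiv ℝ γ (φ p)).comp (fderiv ℝ φ p)) p :=
    ((hγ.differentiable one_ne_zero) (φ p)).hasFDerivAt.comp p hφ.hasFDerivAt
  have hDΓ : fderiv ℝ γ (φ p) (fderiv ℝ φ p (u p, 1)) = 0 := by
    rw [fderiv_riemannInvariants_apply (hud p) (hvd p),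
      ← pt_add_mul_px (hud p).hasFDerivAt, ← pt_add_mul_px (hvd p).hasFDerivAt, hsol₁, hsol₂,
      mul_zero]
    exact map_zero _
  have hG : HasFDerivAt (fun q => γ (φ q) * px u q)
      (γ (φ p) • fderiv ℝ (px u) p + px u p • (fderiv ℝ γ (φ p)).comp (fderiv ℝ φ p)) p :=
    hΓ.mul (((hu.px le_rfl).differentiable one_ne_zero) p).hasFDerivAt
  simp only [mul_assoc]
  refine (hasDerivAt_burgers_sub_mul (hud p).hasFDerivAt hG).congr_deriv ?_
  simp only [add_apply, smul_apply, ContinuousLinearMap.comp_apply, smul_eq_mul, hDΓ,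
    fderiv_px_apply_of_burgers hu hsol₁ p, ← px_eq_of_hasFDerivAt (hud p).hasFDerivAt]
  ring
end

section
/- Let F : ℝᵐ × ℝᵏ → ℝ be C² with the set {(x,y) : F(x,y) ≠ 0} dense in ℝᵐ × ℝᵏ, and suppose there exist C¹ functions g₁, …, g_k : ℝᵐ × ℝᵏ → ℝ such that ∂F/∂y_j = g_j·F everywhere for each j = 1, …, k. Then there exist a C¹ function Φ : ℝᵐ × ℝᵏ → ℝ and a function C : ℝᵐ → ℝ such that F(x,y) = C(x)·e^{Φ(x,y)} for all (x,y). Hence the equation F = 0 is, up to the nonzero multiplicative factor e^{Φ}, an equation in the x-variables alone (it is decoupled in those variables). -/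
/-!
Where `F ≠ 0` we have `g_j = ∂_{y_j} log |F|`, so the `y`-form `G = Σ_j g_j dy_j` is closed there;
by density of `{F ≠ 0}` and continuity of `∂_y G` it is closed everywhere. Its radial primitive
`Φ(x, y) = ∫₀¹ G(x, t y) y dt` is `C¹` in `(x, y)` jointly and satisfies `∂_y Φ = G`, so
`F e^{-Φ}` has vanishing `y`-derivative and `F(x, y) = F(x, 0) e^{Φ(x, y)}`.
-/

open Filter Topology Set Interval Real

theorem contDiff_one_parametric_intervalIntegral {H W : Type*}
    [NormedAddCommGroup H] [NormedSpace ℝ H] [NormedAddCommGroup W] [NormedSpace ℝ W]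
    [CompleteSpace W] {f : H → ℝ → W} (hf : ContDiff ℝ 1 (Function.uncurry f)) (a b : ℝ) :
    ContDiff ℝ 1 fun x => ∫ t in a..b, f x t := by
  set f' : H → ℝ → H →L[ℝ] W := fun x t =>
    (fderiv ℝ (Function.uncurry f) (x, t)).comp (ContinuousLinearMap.inl ℝ H ℝ)
  have hf'_cont : Continuous (Function.uncurry f') :=
    (hf.continuous_fderiv one_ne_zero).clm_comp continuous_const
  have hf'_deriv : ∀ x t, HasFDerivAt (fun x => f x t) (f' x t) x := fun x t => by
    exact (hf.differentiable one_ne_zero (x, t)).hasFDerivAt.comp x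
      (hasFDerivAt_prodMk_left (𝕜 := ℝ) x t)
  have hf'_bound : ∀ x₀, ∃ M, ∀ᶠ x in 𝓝 x₀, ∀ t ∈ [[a, b]], ‖f' x t‖ ≤ M := by
    intro x₀
    obtain ⟨M, hM⟩ := isCompact_uIcc.exists_bound_of_continuousOn
      (hf'_cont.comp (Continuous.prodMk_right x₀)).continuousOn
    refine ⟨M + 1, isCompact_uIcc.eventually_forall_of_forall_eventually fun t ht => ?_⟩
    have hlt : ‖Function.uncurry f' (x₀, t)‖ < M + 1 := (hM t ht).trans_lt (lt_add_one M)
    exact (hf'_cont.norm.continuousAt.eventually_lt continuousAt_const hlt).mono fun _ h => h.le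
  have hderiv : ∀ x₀, HasFDerivAt (fun x => ∫ t in a..b, f x t) (∫ t in a..b, f' x₀ t) x₀ := by
    intro x₀
    obtain ⟨M, hM⟩ := hf'_bound x₀
    have hcont : ∀ x, Continuous (f x) := fun x => hf.continuous.comp (Continuous.prodMk_right x)
    refine intervalIntegral.hasFDerivAt_integral_of_dominated_of_fderiv_le (bound := fun _ => M)
      hM (Eventually.of_forall fun x => (hcont x).aestronglyMeasurable)
      ((hcont x₀).intervalIntegrable a b)
      (hf'_cont.comp (Continuous.prodMk_right x₀)).aestronglyMeasurable
      (Eventually.of_forall fun t ht x hx => hx t (uIoc_subset_uIcc ht))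
      intervalIntegrable_const
      (Eventually.of_forall fun t _ x _ => hf'_deriv x t)
  rw [contDiff_one_iff_fderiv]
  refine ⟨fun x => (hderiv x).differentiableAt, ?_⟩
  rw [funext fun x => (hderiv x).fderiv]
  exact intervalIntegral.continuous_parametric_intervalIntegral_of_continuous' hf'_cont a b

section

variable {E V W : Type*} [NormedAddCommGroup V] [NormedSpace ℝ V] [NormedAddCommGroup W]
  [NormedSpace ℝ W]

noncomputable def radialPotential (G : E × V → V →L[ℝ] W) (p : E × V) : W :=
  ∫ t in (0 : ℝ)..1, G (p.1, t • p.2) p.2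

theorem radialPotential_mk_zero (G : E × V → V →L[ℝ] W) (x : E) :
    radialPotential G (x, 0) = 0 := by
  simp [radialPotential]

variable [NormedAddCommGroup E] [NormedSpace ℝ E]

theorem fderiv_snd_symm_of_fderiv_snd_eq_smul {F : E × V → ℝ} (hF : ContDiff ℝ 2 F)
    (hdense : Dense {p | F p ≠ 0}) {G : E × V → V →L[ℝ] ℝ} (hG : ContDiff ℝ 1 G)
    (hFG : ∀ p, (fderiv ℝ F p).comp (ContinuousLinearMap.inr ℝ E V) = F p • G p)
    (p : E × V) (v w : V) :
    fderiv ℝ G p (0, v) w = fderiv ℝ G p (0, w) v := by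
  have hFG' : ∀ p v, fderiv ℝ F p (0, v) = F p * G p v := fun p v => by
    simpa using DFunLike.congr_fun (hFG p) v
  have hF2 : ∀ q v w, fderiv ℝ (fderiv ℝ F) q (0, v) (0, w)
      = F q * (G q v * G q w + fderiv ℝ G q (0, v) w) := by
    intro q v w
    have h₁ : HasFDerivAt (fun p => fderiv ℝ F p (0, w))
        ((fderiv ℝ (fderiv ℝ F) q).flip (0, w)) q :=
      ((hF.fderiv_right le_rfl).differentiable one_ne_zero q).hasFDerivAt.clm_apply
        (hasFDerivAt_const _ q) |>.congr_fderiv (by rw [ContinuousLinearMap.comp_zero, zero_add])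
    have h₂ : HasFDerivAt (fun p => fderiv ℝ F p (0, w))
        (F q • (fderiv ℝ G q).flip w + G q w • fderiv ℝ F q) q := by
      simp only [hFG']
      have hGw : HasFDerivAt (fun p => G p w) ((fderiv ℝ G q).flip w) q :=
        (hG.differentiable one_ne_zero q).hasFDerivAt.clm_apply (hasFDerivAt_const w q)
          |>.congr_fderiv (by rw [ContinuousLinearMap.comp_zero, zero_add])
      exact (hF.differentiable two_ne_zero q).hasFDerivAt.mul hGw
    rw [← ContinuousLinearMap.flip_apply, h₁.unique h₂]
    simp only [add_apply, smul_apply, ContinuousLinearMap.flip_apply, smul_eq_mul, hFG']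
    ring
  have hsymm_on : ∀ q, F q ≠ 0 → fderiv ℝ G q (0, v) w = fderiv ℝ G q (0, w) v := by
    intro q hq
    have := (hF.contDiffAt (x := q)).isSymmSndFDerivAt (by simp) (0, v) (0, w)
    rw [hF2, hF2, mul_comm (G q v)] at this
    simpa using mul_left_cancel₀ hq this
  have hcont : ∀ v w : V, Continuous fun q => fderiv ℝ G q (0, v) w := fun v w =>
    ((hG.continuous_fderiv one_ne_zero).clm_apply continuous_const).clm_apply continuous_const
  exact congrFun ((hcont v w).ext_on hdense (hcont w v) hsymm_on) p

variable [CompleteSpace W]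

theorem contDiff_radialPotential {G : E × V → V →L[ℝ] W} (hG : ContDiff ℝ 1 G) :
    ContDiff ℝ 1 (radialPotential G) :=
  contDiff_one_parametric_intervalIntegral ((hG.comp (by fun_prop)).clm_apply (by fun_prop)) 0 1

theorem hasFDerivAt_radialPotential_snd {G : E × V → V →L[ℝ] W} (hG : Differentiable ℝ G)
    (hsymm : ∀ p v w, fderiv ℝ G p (0, v) w = fderiv ℝ G p (0, w) v) (x : E) (y : V) :
    HasFDerivAt (fun y => radialPotential G (x, y)) (G (x, y)) y := by
  -- `radialPotential G (x, ·)` integrates the closed form `G (x, ·)` along segments from `0`,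
  -- which is the primitive constructed in the Poincaré lemma.
  have hω : ∀ z, HasFDerivAt (fun z => G (x, z))
      ((fderiv ℝ G (x, z)).comp (ContinuousLinearMap.inr ℝ E V)) z := fun z =>
    (hG (x, z)).hasFDerivAt.comp z (hasFDerivAt_prodMk_right x z)
  have key := convex_univ.hasFDerivWithinAt_curveIntegral_segment_of_hasFDerivWithinAt_symmetric
    (fun z _ => (hω z).hasFDerivWithinAt) (fun z _ v _ w _ => hsymm (x, z) v w)
    (mem_univ 0) (mem_univ y)
  rw [hasFDerivWithinAt_univ] at key
  convert key using 1
  funext z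
  simp [radialPotential, curveIntegral_segment, AffineMap.lineMap_apply_module]

theorem mul_exp_neg_eq_of_hasFDerivAt {f φ : V → ℝ} {L : V → V →L[ℝ] ℝ}
    (hf : ∀ y, HasFDerivAt f (f y • L y) y) (hφ : ∀ y, HasFDerivAt φ (L y) y) (y z : V) :
    f y * exp (-φ y) = f z * exp (-φ z) := by
  have hderiv : ∀ y, HasFDerivAt (fun y => f y * exp (-φ y)) 0 y := fun y =>
    ((hf y).mul (hφ y).neg.exp).congr_fderiv (by ext; simp; ring)
  exact is_const_of_fderiv_eq_zero (fun y => (hderiv y).differentiableAt)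
    (fun y => (hderiv y).fderiv) y z

theorem eq_mul_exp_radialPotential {F : E × V → ℝ} (hF : ContDiff ℝ 2 F)
    (hdense : Dense {p | F p ≠ 0}) {G : E × V → V →L[ℝ] ℝ} (hG : ContDiff ℝ 1 G)
    (hFG : ∀ p, (fderiv ℝ F p).comp (ContinuousLinearMap.inr ℝ E V) = F p • G p) (p : E × V) :
    F p = F (p.1, 0) * exp (radialPotential G p) := by
  obtain ⟨x, y⟩ := p
  have hΦ := hasFDerivAt_radialPotential_snd (hG.differentiable one_ne_zero)
    (fderiv_snd_symm_of_fderiv_snd_eq_smul hF hdense hG hFG) x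
  have hF_snd : ∀ y, HasFDerivAt (fun y => F (x, y)) (F (x, y) • G (x, y)) y := fun y =>
    hFG (x, y) ▸ (hF.differentiable two_ne_zero (x, y)).hasFDerivAt.comp y
      (hasFDerivAt_prodMk_right x y)
  have hconst := mul_exp_neg_eq_of_hasFDerivAt hF_snd hΦ y 0
  rw [radialPotential_mk_zero, neg_zero, exp_zero, mul_one] at hconst
  rw [← hconst, mul_assoc, ← exp_add, neg_add_cancel, exp_zero, mul_one]

end

/-- Analytic core of the decoupling theorem: if `F : ℝᵐ × ℝᵏ → ℝ` is C² with `{F ≠ 0}`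
dense, and there are C¹ functions `g_j` with `∂F/∂y_j = g_j · F` everywhere, then
`F(x,y) = C(x) e^{Φ(x,y)}` for some C¹ potential `Φ` and some function `C` of `x` alone;
hence `F = 0` is, up to the nonzero factor `e^Φ`, an equation in the `x`-variables only. -/
theorem decoupling_representation (m k : ℕ)
    (F : (Fin m → ℝ) × (Fin k → ℝ) → ℝ)
    (hF : ContDiff ℝ 2 F)
    (hdense : Dense {p : (Fin m → ℝ) × (Fin k → ℝ) | F p ≠ 0})
    (g : Fin k → (Fin m → ℝ) × (Fin k → ℝ) → ℝ)
    (hg : ∀ j : Fin k, ContDiff ℝ 1 (g j))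
    (h : ∀ j : Fin k, ∀ p : (Fin m → ℝ) × (Fin k → ℝ),
      fderiv ℝ F p (0, Pi.single j 1) = g j p * F p) :
    ∃ (Φ : (Fin m → ℝ) × (Fin k → ℝ) → ℝ) (C : (Fin m → ℝ) → ℝ),
      ContDiff ℝ 1 Φ ∧
      ∀ p : (Fin m → ℝ) × (Fin k → ℝ), F p = C p.1 * Real.exp (Φ p) := by
  set G : (Fin m → ℝ) × (Fin k → ℝ) → (Fin k → ℝ) →L[ℝ] ℝ :=
    fun p => ∑ j, g j p • ContinuousLinearMap.proj j
  have hG : ContDiff ℝ 1 G := ContDiff.sum fun j _ => (hg j).smul contDiff_const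
  have hFG : ∀ p, (fderiv ℝ F p).comp (ContinuousLinearMap.inr ℝ _ _) = F p • G p := fun p =>
    ContinuousLinearMap.coe_injective <| (Pi.basisFun ℝ (Fin k)).ext fun j => by
      simp [G, h, Pi.single_apply, mul_comm]
  exact ⟨radialPotential G, fun x => F (x, 0), contDiff_radialPotential hG,
    eq_mul_exp_radialPotential hF hdense hG hFG⟩
end

section
/- Let A¹, A² : ℝ² × ℝ² → ℝ be C² functions of (x, u) = (x₁, x₂, u¹, u²) whose Jacobian determinant |∂A| := (∂A¹/∂u¹)(∂A²/∂u²) − (∂A¹/∂u²)(∂A²/∂u¹) is nonzero at every point. Let u = (u¹, u²) : ℝ² → ℝ² be C¹ and let P¹, P² : ℝ² → ℝ be C¹. Define α, β : ℝ² → ℝ by Cramer's formulas along u: α = (A²_{u²}·P¹ − A¹_{u²}·P²)/|∂A| and β = (A¹_{u¹}·P² − A²_{u¹}·P¹)/|∂A|, all partial derivatives of the A's evaluated at (x, u(x)). Then: (i) for each i = 1,2 and each x, the derivative at ε = 0 of ε ↦ A^i(x, u(x) + ε(α(x), β(x))) equals P^i(x); and (ii) if additionally α, β are C¹, the derivative at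 ε = 0 of ε ↦ ∂/∂x₁[A¹(x, u + ε(α,β))] + ∂/∂x₂[A²(x, u + ε(α,β))] equals ∂P¹/∂x₁ + ∂P²/∂x₂ at every x. Hence the vector field with characteristics (α, β) deforms the flux pair (A¹, A²) into the flux pair (P¹, P²), and deforms the divergence D₁A¹ + D₂A² into the divergence D₁P¹ + D₂P². -/
/-! By Cramer's rule, `(α, β)` solves `A^i_{u¹} α + A^i_{u²} β = P^i`: the derivative of `A^i`
in the direction `(0, (α, β))` of the `u`-variables is `P^i`, which is the pointwise deformation.
For the divergence, differentiating in `ε` and in `x_k` commute because the second derivative of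
a `C²` flux is symmetric, so `D_k A^k` is deformed into `D_k` of the deformed flux, `D_k P^k`. -/

/-- Partial derivative `∂/∂x₁` of a function of `x = (x₁, x₂)`. -/
noncomputable def d1 (f : ℝ × ℝ → ℝ) (p : ℝ × ℝ) : ℝ := deriv (fun s => f (s, p.2)) p.1

/-- Partial derivative `∂/∂x₂` of a function of `x = (x₁, x₂)`. -/
noncomputable def d2 (f : ℝ × ℝ → ℝ) (p : ℝ × ℝ) : ℝ := deriv (fun s => f (p.1, s)) p.2

/-- Partial derivative `∂A/∂u¹` of a flux `A(x, u)`, `x ∈ ℝ²`, `u ∈ ℝ²`. -/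
noncomputable def dU1 (A : (ℝ × ℝ) × (ℝ × ℝ) → ℝ) (p : (ℝ × ℝ) × (ℝ × ℝ)) : ℝ :=
  fderiv ℝ A p (((0 : ℝ), (0 : ℝ)), ((1 : ℝ), (0 : ℝ)))

/-- Partial derivative `∂A/∂u²` of a flux `A(x, u)`, `x ∈ ℝ²`, `u ∈ ℝ²`. -/
noncomputable def dU2 (A : (ℝ × ℝ) × (ℝ × ℝ) → ℝ) (p : (ℝ × ℝ) × (ℝ × ℝ)) : ℝ :=
  fderiv ℝ A p (((0 : ℝ), (0 : ℝ)), ((0 : ℝ), (1 : ℝ)))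

section FluxDeformation

variable {E F G : Type*} [NormedAddCommGroup E] [NormedSpace ℝ E]
  [NormedAddCommGroup F] [NormedSpace ℝ F] [NormedAddCommGroup G] [NormedSpace ℝ G]

theorem hasDerivAt_comp_add_smul_snd {A : E × F → G} {x : E} {y : F}
    (hA : DifferentiableAt ℝ A (x, y)) (w : F) :
    HasDerivAt (fun ε : ℝ => A (x, y + ε • w)) (fderiv ℝ A (x, y) (0, w)) 0 := by
  have h : HasDerivAt (fun ε : ℝ => A ((x, y) + ε • (0, w))) (fderiv ℝ A (x, y) (0, w)) 0 :=
    hA.hasFDerivAt.hasLineDerivAt (0, w)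
  simpa only [Prod.smul_mk, smul_zero, Prod.mk_add_mk, add_zero] using h

theorem hasDerivAt_deriv_comp_add_smul {A : E → F} (hA : ContDiff ℝ 2 A) {γ V : ℝ → E} {t : ℝ}
    (hγ : DifferentiableAt ℝ γ t) (hV : DifferentiableAt ℝ V t) :
    HasDerivAt (fun ε : ℝ => deriv (fun s => A (γ s + ε • V s)) t)
      (deriv (fun s => fderiv ℝ A (γ s) (V s)) t) 0 := by
  have hAd : Differentiable ℝ A := hA.differentiable (by norm_num)
  have hDA : Differentiable ℝ (fderiv ℝ A) :=
    (hA.fderiv_right (m := 1) (by norm_num)).differentiable one_ne_zero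
  set p := γ t
  set e := V t
  set Φ := fderiv ℝ A
  have inner : ∀ ε : ℝ, deriv (fun s => A (γ s + ε • V s)) t
      = Φ (p + ε • e) (deriv γ t) + ε • Φ (p + ε • e) (deriv V t) := fun ε => by
    have h := ((hAd _).hasFDerivAt.comp_hasDerivAt t
      (hγ.hasDerivAt.fun_add (hV.hasDerivAt.fun_const_smul ε))).deriv
    rwa [map_add, map_smul] at h
  have hline : HasDerivAt (fun ε : ℝ => Φ (p + ε • e)) (fderiv ℝ Φ p e) 0 :=
    (hDA p).hasFDerivAt.hasLineDerivAt e
  have outer : HasDerivAt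
      (fun ε : ℝ => Φ (p + ε • e) (deriv γ t) + ε • Φ (p + ε • e) (deriv V t))
      (fderiv ℝ Φ p e (deriv γ t) + Φ p (deriv V t)) 0 := by
    simpa using (hline.clm_apply (hasDerivAt_const 0 (deriv γ t))).fun_add
      ((hasDerivAt_id' (0 : ℝ)).fun_smul (hline.clm_apply (hasDerivAt_const 0 (deriv V t))))
  have rhs : HasDerivAt (fun s => Φ (γ s) (V s)) (fderiv ℝ Φ p (deriv γ t) e + Φ p (deriv V t)) t :=
    ((hDA _).hasFDerivAt.comp_hasDerivAt t hγ.hasDerivAt).clm_apply hV.hasDerivAt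
  -- the two sides differ only in the order of the arguments of `D²A p`
  have hsymm := hA.contDiffAt.isSymmSndFDerivAt (x := p) (by simp) e (deriv γ t)
  rw [funext inner, rhs.deriv, ← hsymm]
  exact outer

theorem hasDerivAt_deriv_flux_deformation {A : E × F → G} (hA : ContDiff ℝ 2 A) {u w : E → F}
    {σ : ℝ → E} {t : ℝ} (hσ : DifferentiableAt ℝ σ t) (hu : DifferentiableAt ℝ u (σ t))
    (hw : DifferentiableAt ℝ w (σ t)) :
    HasDerivAt (fun ε : ℝ => deriv (fun s => A (σ s, u (σ s) + ε • w (σ s))) t)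
      (deriv (fun s => fderiv ℝ A (σ s, u (σ s)) (0, w (σ s))) t) 0 := by
  have key := hasDerivAt_deriv_comp_add_smul hA (γ := fun s => (σ s, u (σ s)))
    (V := fun s => (0, w (σ s))) (hσ.prodMk (hu.comp t hσ))
    ((differentiableAt_const _).prodMk (hw.comp t hσ))
  simpa only [Prod.smul_mk, smul_zero, Prod.mk_add_mk, add_zero] using key

end FluxDeformation

theorem ContinuousLinearMap.apply_zero_prodMk {E : Type*} [NormedAddCommGroup E] [NormedSpace ℝ E]
    (L : E × (ℝ × ℝ) →L[ℝ] ℝ) (a b : ℝ) :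
    L (0, (a, b)) = a * L (0, (1, 0)) + b * L (0, (0, 1)) := by
  rw [← smul_eq_mul, ← smul_eq_mul, ← map_smul, ← map_smul, ← map_add]
  congr 1
  simp

theorem cramer_two {K : Type*} [Field K] {a b c d p q : K} (h : a * d - b * c ≠ 0) :
    (d * p - b * q) / (a * d - b * c) * a + (a * q - c * p) / (a * d - b * c) * b = p ∧
      (d * p - b * q) / (a * d - b * c) * c + (a * q - c * p) / (a * d - b * c) * d = q := by
  constructor <;>
  · rw [div_mul_eq_mul_div, div_mul_eq_mul_div, ← add_div, div_eq_iff h]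
    ring

theorem subsymmetry_deformation_of_CL_general
    (A1 A2 : (ℝ × ℝ) × (ℝ × ℝ) → ℝ)
    (hA1 : ContDiff ℝ 2 A1) (hA2 : ContDiff ℝ 2 A2)
    (hJ : ∀ p : (ℝ × ℝ) × (ℝ × ℝ), dU1 A1 p * dU2 A2 p - dU2 A1 p * dU1 A2 p ≠ 0)
    (u : ℝ × ℝ → ℝ × ℝ) (hu : ContDiff ℝ 1 u)
    (P1 P2 : ℝ × ℝ → ℝ)
    (α β : ℝ × ℝ → ℝ)
    (hα : ∀ x : ℝ × ℝ, α x =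
      (dU2 A2 (x, u x) * P1 x - dU2 A1 (x, u x) * P2 x) /
        (dU1 A1 (x, u x) * dU2 A2 (x, u x) - dU2 A1 (x, u x) * dU1 A2 (x, u x)))
    (hβ : ∀ x : ℝ × ℝ, β x =
      (dU1 A1 (x, u x) * P2 x - dU1 A2 (x, u x) * P1 x) /
        (dU1 A1 (x, u x) * dU2 A2 (x, u x) - dU2 A1 (x, u x) * dU1 A2 (x, u x))) :
    (∀ x : ℝ × ℝ,
      HasDerivAt (fun ε : ℝ => A1 (x, u x + ε • (α x, β x))) (P1 x) 0 ∧
      HasDerivAt (fun ε : ℝ => A2 (x, u x + ε • (α x, β x))) (P2 x) 0) ∧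
    (ContDiff ℝ 1 α → ContDiff ℝ 1 β →
      ∀ x : ℝ × ℝ,
        HasDerivAt (fun ε : ℝ =>
            d1 (fun y => A1 (y, u y + ε • (α y, β y))) x
              + d2 (fun y => A2 (y, u y + ε • (α y, β y))) x)
          (d1 P1 x + d2 P2 x) 0) := by
  have hA1d : Differentiable ℝ A1 := hA1.differentiable (by norm_num)
  have hA2d : Differentiable ℝ A2 := hA2.differentiable (by norm_num)
  have hP : ∀ x, fderiv ℝ A1 (x, u x) (0, (α x, β x)) = P1 x ∧
      fderiv ℝ A2 (x, u x) (0, (α x, β x)) = P2 x := fun x => by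
    rw [(fderiv ℝ A1 _).apply_zero_prodMk, (fderiv ℝ A2 _).apply_zero_prodMk, hα, hβ]
    exact cramer_two (p := P1 x) (q := P2 x) (hJ (x, u x))
  refine ⟨fun x => ⟨?_, ?_⟩, fun hα' hβ' x => ?_⟩
  · rw [← (hP x).1]
    exact hasDerivAt_comp_add_smul_snd (hA1d (x, u x)) (α x, β x)
  · rw [← (hP x).2]
    exact hasDerivAt_comp_add_smul_snd (hA2d (x, u x)) (α x, β x)
  · have hud := hu.differentiable one_ne_zero
    have hwd := (hα'.prodMk hβ').differentiable one_ne_zero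
    have h1 := hasDerivAt_deriv_flux_deformation hA1 (σ := fun s => (s, x.2)) (t := x.1)
      (by fun_prop) (hud _) (hwd _)
    have h2 := hasDerivAt_deriv_flux_deformation hA2 (σ := fun s => (x.1, s)) (t := x.2)
      (by fun_prop) (hud _) (hwd _)
    simpa only [d1, d2, hP] using h1.fun_add h2

/-- Constructive core of the sub-symmetry deformation theorem: given fluxes `A¹, A²`
depending on `(x, u)` with everywhere nonzero Jacobian
`|∂A| = A¹_{u¹} A²_{u²} − A¹_{u²} A²_{u¹}`, and fluxes `P¹, P²`, the characteristics
`(α, β)` obtained by Cramer's formulas deform `(A¹, A²)` into `(P¹, P²)` pointwise, and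
(if `α, β` are C¹) deform the divergence `D₁A¹ + D₂A²` into `D₁P¹ + D₂P²`. -/
theorem subsymmetry_deformation_of_CL
    (A1 A2 : (ℝ × ℝ) × (ℝ × ℝ) → ℝ)
    (hA1 : ContDiff ℝ 2 A1) (hA2 : ContDiff ℝ 2 A2)
    (hJ : ∀ p : (ℝ × ℝ) × (ℝ × ℝ), dU1 A1 p * dU2 A2 p - dU2 A1 p * dU1 A2 p ≠ 0)
    (u : ℝ × ℝ → ℝ × ℝ) (hu : ContDiff ℝ 1 u)
    (P1 P2 : ℝ × ℝ → ℝ) (hP1 : ContDiff ℝ 1 P1) (hP2 : ContDiff ℝ 1 P2)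
    (α β : ℝ × ℝ → ℝ)
    (hα : ∀ x : ℝ × ℝ, α x =
      (dU2 A2 (x, u x) * P1 x - dU2 A1 (x, u x) * P2 x) /
        (dU1 A1 (x, u x) * dU2 A2 (x, u x) - dU2 A1 (x, u x) * dU1 A2 (x, u x)))
    (hβ : ∀ x : ℝ × ℝ, β x =
      (dU1 A1 (x, u x) * P2 x - dU1 A2 (x, u x) * P1 x) /
        (dU1 A1 (x, u x) * dU2 A2 (x, u x) - dU2 A1 (x, u x) * dU1 A2 (x, u x))) :
    (∀ x : ℝ × ℝ,
      HasDerivAt (fun ε : ℝ => A1 (x, u x + ε • (α x, β x))) (P1 x) 0 ∧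
      HasDerivAt (fun ε : ℝ => A2 (x, u x + ε • (α x, β x))) (P2 x) 0) ∧
    (ContDiff ℝ 1 α → ContDiff ℝ 1 β →
      ∀ x : ℝ × ℝ,
        HasDerivAt (fun ε : ℝ =>
            d1 (fun y => A1 (y, u y + ε • (α y, β y))) x
              + d2 (fun y => A2 (y, u y + ε • (α y, β y))) x)
          (d1 P1 x + d2 P2 x) 0) :=
  subsymmetry_deformation_of_CL_general A1 A2 hA1 hA2 hJ u hu P1 P2 α β hα hβ
end
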